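/- Let A be an n×n irreducible completely positive matrix, n ≥ 2, whose graph is triangle free, and suppose the comparison matrix M(A) is singular. Then A has a unique CP factorization, and the number of rank-one summands in it equals the number of edges of G(A). -/

import Mathlib

/-!
Let `A = ∑ b bᵀ` be a CP representation and `M(A) x = 0` with `x ≠ 0`. Since `A ≥ 0`,
`xᵀ M(A) x = ∑_b (2 ∑_k (b_k x_k)² - (∑_k b_k x_k)²)`. The support of each `b` is a clique of
`G(A)`, so it has at most two points, and each summand is a square, `(b_i x_i)²` or
`(b_i x_i - b_j x_j)²`; hence every summand vanishes. Along each edge this gives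
`b_i x_i = b_j x_j`, so by connectivity `x` has no zero entry. Then no `b` has a one-point
support, two summands on the same edge are proportional, hence equal, and `b_i b_j = a_ij`
together with `b_i x_i = b_j x_j` determines `b`: every CP representation consists of exactly
one explicit vector per edge.
-/

open Matrix

/-- A CP representation of `A`: a multiset of nonnegative, nonzero, pairwise linearly
independent vectors whose rank-one outer products sum to `A`. Counted as a multiset,
i.e. up to reordering of the summands (columns). -/
def IsCPRep {n : ℕ} (A : Matrix (Fin n) (Fin n) ℝ) (L : Multiset (Fin n → ℝ)) : Prop :=
  (∀ b ∈ L, ∀ i, 0 ≤ b i) ∧ (∀ b ∈ L, b ≠ 0) ∧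
  L.Pairwise (fun b c => LinearIndependent ℝ ![b, c]) ∧
  (L.map fun b => vecMulVec b b).sum = A

/-- `A` is completely positive. -/
def IsCP {n : ℕ} (A : Matrix (Fin n) (Fin n) ℝ) : Prop := ∃ L, IsCPRep A L

/-- The cp-rank: minimal number of rank-one summands in a CP representation. -/
noncomputable def cpRank {n : ℕ} (A : Matrix (Fin n) (Fin n) ℝ) : ℕ :=
  sInf {k | ∃ L, IsCPRep A L ∧ Multiset.card L = k}

/-- A minimal CP representation: a CP representation with `cpRank A` summands. -/
def IsMinCPRep {n : ℕ} (A : Matrix (Fin n) (Fin n) ℝ) (L : Multiset (Fin n → ℝ)) : Prop :=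
  IsCPRep A L ∧ Multiset.card L = cpRank A

/-- The graph of a symmetric matrix: `i ~ j` iff `i ≠ j` and `A i j ≠ 0`. -/
def matGraph {n : ℕ} (A : Matrix (Fin n) (Fin n) ℝ) : SimpleGraph (Fin n) where
  Adj i j := i ≠ j ∧ (A i j ≠ 0 ∨ A j i ≠ 0)
  symm := ⟨by intro _ _ h; exact ⟨h.1.symm, h.2.symm⟩⟩
  loopless := ⟨by intro _ h; exact h.1 rfl⟩

/-- The comparison matrix `M(A)`. -/
noncomputable def compMatrix {n : ℕ} (A : Matrix (Fin n) (Fin n) ℝ) : Matrix (Fin n) (Fin n) ℝ :=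
  fun i j => if i = j then |A i j| else -|A i j|



section TwoSupport

variable {ι : Type*} [Fintype ι] {y : ι → ℝ}

lemma two_mul_sum_sq_sub_sq_sum_of_single {i : ι} (h : ∀ k ≠ i, y k = 0) :
    2 * ∑ k, y k ^ 2 - (∑ k, y k) ^ 2 = y i ^ 2 := by
  rw [Fintype.sum_eq_single i fun k hk => by simp [h k hk], Fintype.sum_eq_single i h]
  ring

lemma two_mul_sum_sq_sub_sq_sum_of_pair {i j : ι} (hij : i ≠ j)
    (h : ∀ k, k ≠ i ∧ k ≠ j → y k = 0) :
    2 * ∑ k, y k ^ 2 - (∑ k, y k) ^ 2 = (y i - y j) ^ 2 := by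
  rw [Fintype.sum_eq_add i j hij fun k hk => by simp [h k hk], Fintype.sum_eq_add i j hij h]
  ring

end TwoSupport

lemma SimpleGraph.Preconnected.forall_of_forall_adj {V : Type*} {G : SimpleGraph V}
    (hG : G.Preconnected) {P : V → Prop} (hP : ∀ u v, G.Adj u v → P u → P v) {u : V}
    (hu : P u) (v : V) : P v := by
  induction (G.reachable_iff_reflTransGen u v).1 (hG u v) with
  | refl => exact hu
  | tail _ hadj ih => exact hP _ _ hadj ih

lemma compMatrix_eq_of_nonneg {n : ℕ} {A : Matrix (Fin n) (Fin n) ℝ} (hA : ∀ i j, 0 ≤ A i j) :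
    compMatrix A = (2 : ℝ) • diagonal A.diag - A := by
  ext i j
  by_cases hij : i = j
  · subst hij; simp [compMatrix, abs_of_nonneg (hA i i)]; ring
  · simp [compMatrix, hij, abs_of_nonneg (hA i j)]

/-- The only possible summand supported on the edge `{i, j}`: the conditions `b i * b j = A i j`
and `b i * x i = b j * x j` force `b i ^ 2 = A i j * x j / x i`. -/
noncomputable def edgeVector {n : ℕ} (A : Matrix (Fin n) (Fin n) ℝ) (x : Fin n → ℝ) :
    Sym2 (Fin n) → Fin n → ℝ :=
  Sym2.lift ⟨fun i j k =>
      if k = i then √(A i j * x j / x i) else if k = j then √(A j i * x i / x j) else 0,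
    fun i j => by ext k; dsimp only; split_ifs <;> simp_all⟩

namespace IsCPRep

variable {n : ℕ} {A : Matrix (Fin n) (Fin n) ℝ} {L : Multiset (Fin n → ℝ)}

lemma nodup (hL : IsCPRep A L) : L.Nodup := by
  obtain ⟨l, rfl, hl⟩ := hL.2.2.1
  refine Multiset.coe_nodup.2 (hl.imp fun hbc hbb => ?_)
  subst hbb
  exact (LinearIndependent.pair_iff.1 hbc) 1 (-1) (by simp) |>.1 |> one_ne_zero

lemma sum_toFinset (hL : IsCPRep A L) : ∑ b ∈ L.toFinset, vecMulVec b b = A := by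
  rw [← hL.2.2.2, Finset.sum_eq_multiset_sum, Multiset.toFinset_val, hL.nodup.dedup]

lemma apply_eq_sum (hL : IsCPRep A L) (i j : Fin n) :
    A i j = ∑ b ∈ L.toFinset, b i * b j := by
  simp [← hL.sum_toFinset, Matrix.sum_apply, vecMulVec_apply]

lemma mul_le_apply (hL : IsCPRep A L) {b : Fin n → ℝ} (hb : b ∈ L) (i j : Fin n) :
    b i * b j ≤ A i j := by
  rw [hL.apply_eq_sum]
  refine Finset.single_le_sum (f := fun c => c i * c j) (fun c hc => ?_)
    (Multiset.mem_toFinset.2 hb)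
  rw [Multiset.mem_toFinset] at hc
  exact mul_nonneg (hL.1 c hc i) (hL.1 c hc j)

lemma apply_nonneg (hL : IsCPRep A L) (i j : Fin n) : 0 ≤ A i j := by
  rw [hL.apply_eq_sum]
  exact Finset.sum_nonneg fun c hc =>
    mul_nonneg (hL.1 c (Multiset.mem_toFinset.1 hc) i) (hL.1 c (Multiset.mem_toFinset.1 hc) j)

lemma apply_comm (hL : IsCPRep A L) (i j : Fin n) : A i j = A j i := by
  simp only [hL.apply_eq_sum, mul_comm]

lemma dotProduct_compMatrix_mulVec (hL : IsCPRep A L) (x : Fin n → ℝ) :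
    x ⬝ᵥ (compMatrix A *ᵥ x)
      = ∑ b ∈ L.toFinset, (2 * ∑ k, (b k * x k) ^ 2 - (∑ k, b k * x k) ^ 2) := by
  have hdiag : x ⬝ᵥ (diagonal A.diag *ᵥ x) = ∑ b ∈ L.toFinset, ∑ k, (b k * x k) ^ 2 := by
    simp only [dotProduct, mulVec_diagonal, diag_apply, hL.apply_eq_sum, Finset.sum_mul,
      Finset.mul_sum]
    rw [Finset.sum_comm]
    refine Finset.sum_congr rfl fun b _ => Finset.sum_congr rfl fun k _ => by ring
  have hquad : x ⬝ᵥ (A *ᵥ x) = ∑ b ∈ L.toFinset, (∑ k, b k * x k) ^ 2 := by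
    rw [← hL.sum_toFinset, Matrix.sum_mulVec, dotProduct_sum]
    refine Finset.sum_congr rfl fun b _ => ?_
    rw [vecMulVec_mulVec, op_smul_eq_smul, dotProduct_smul, smul_eq_mul, dotProduct_comm x b, sq]
    rfl
  rw [compMatrix_eq_of_nonneg hL.apply_nonneg, sub_mulVec, dotProduct_sub, smul_mulVec,
    dotProduct_smul, hdiag, hquad, Finset.sum_sub_distrib, smul_eq_mul, Finset.mul_sum]

lemma adj (hL : IsCPRep A L) {b : Fin n → ℝ} (hb : b ∈ L) {i j : Fin n} (hij : i ≠ j)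
    (hbi : b i ≠ 0) (hbj : b j ≠ 0) : (matGraph A).Adj i j := by
  have hpos : 0 < b i * b j :=
    mul_pos ((hL.1 b hb i).lt_of_ne' hbi) ((hL.1 b hb j).lt_of_ne' hbj)
  exact ⟨hij, Or.inl (hpos.trans_le (hL.mul_le_apply hb i j)).ne'⟩

lemma exists_mem_of_adj (hL : IsCPRep A L) {i j : Fin n} (h : (matGraph A).Adj i j) :
    ∃ b ∈ L, b i ≠ 0 ∧ b j ≠ 0 := by
  have hA : A i j ≠ 0 := h.2.elim id fun h' => hL.apply_comm i j ▸ h'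
  rw [hL.apply_eq_sum] at hA
  obtain ⟨b, hb, hbij⟩ := Finset.exists_ne_zero_of_sum_ne_zero hA
  exact ⟨b, Multiset.mem_toFinset.1 hb, left_ne_zero_of_mul hbij, right_ne_zero_of_mul hbij⟩

lemma eq_of_smul_eq (hL : IsCPRep A L) {b c : Fin n → ℝ} (hb : b ∈ L) (hc : c ∈ L) {t : ℝ}
    (h : t • b = c) : b = c := by
  have : Std.Symm fun b c : Fin n → ℝ => LinearIndependent ℝ ![b, c] :=
    ⟨fun _ _ => LinearIndependent.pair_symm_iff.1⟩
  by_contra hbc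
  exact (LinearIndependent.pair_iff' (hL.2.1 b hb)).1 (hL.2.2.1.forall hb hc hbc) t h

lemma eq_zero_of_ne_of_ne (hL : IsCPRep A L) (htf : (matGraph A).CliqueFree 3)
    {b : Fin n → ℝ} (hb : b ∈ L) {i j : Fin n} (hij : i ≠ j) (hbi : b i ≠ 0) (hbj : b j ≠ 0)
    {k : Fin n} (hk : k ≠ i ∧ k ≠ j) : b k = 0 := by
  by_contra hbk
  exact htf {i, j, k} (SimpleGraph.is3Clique_triple_iff.2
    ⟨hL.adj hb hij hbi hbj, hL.adj hb hk.1.symm hbi hbk, hL.adj hb hk.2.symm hbj hbk⟩)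

lemma two_mul_sum_sq_sub_sq_sum_nonneg (hL : IsCPRep A L) (htf : (matGraph A).CliqueFree 3)
    {b : Fin n → ℝ} (hb : b ∈ L) (x : Fin n → ℝ) :
    0 ≤ 2 * ∑ k, (b k * x k) ^ 2 - (∑ k, b k * x k) ^ 2 := by
  obtain ⟨i, hbi⟩ : ∃ i, b i ≠ 0 := Function.ne_iff.1 (hL.2.1 b hb)
  by_cases hpair : ∃ j ≠ i, b j ≠ 0
  · obtain ⟨j, hji, hbj⟩ := hpair
    rw [two_mul_sum_sq_sub_sq_sum_of_pair hji.symm fun k hk => by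
      simp [hL.eq_zero_of_ne_of_ne htf hb hji.symm hbi hbj hk]]
    positivity
  · push Not at hpair
    rw [two_mul_sum_sq_sub_sq_sum_of_single (i := i) fun k hk => by simp [hpair k hk]]
    positivity

variable {x : Fin n → ℝ}

lemma two_mul_sum_sq_sub_sq_sum_eq_zero (hL : IsCPRep A L) (htf : (matGraph A).CliqueFree 3)
    (hker : compMatrix A *ᵥ x = 0) {b : Fin n → ℝ} (hb : b ∈ L) :
    2 * ∑ k, (b k * x k) ^ 2 - (∑ k, b k * x k) ^ 2 = 0 := by
  have hsum := hL.dotProduct_compMatrix_mulVec x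
  rw [hker, dotProduct_zero, eq_comm, Finset.sum_eq_zero_iff_of_nonneg fun c hc =>
    hL.two_mul_sum_sq_sub_sq_sum_nonneg htf (Multiset.mem_toFinset.1 hc) x] at hsum
  exact hsum b (Multiset.mem_toFinset.2 hb)

lemma mul_eq_mul (hL : IsCPRep A L) (htf : (matGraph A).CliqueFree 3)
    (hker : compMatrix A *ᵥ x = 0) {b : Fin n → ℝ} (hb : b ∈ L) {i j : Fin n} (hij : i ≠ j)
    (hbi : b i ≠ 0) (hbj : b j ≠ 0) : b i * x i = b j * x j := by
  have h := hL.two_mul_sum_sq_sub_sq_sum_eq_zero htf hker hb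
  rw [two_mul_sum_sq_sub_sq_sum_of_pair hij fun k hk => by
    simp [hL.eq_zero_of_ne_of_ne htf hb hij hbi hbj hk]] at h
  exact sub_eq_zero.1 (pow_eq_zero_iff two_ne_zero |>.1 h)

lemma apply_ne_zero_of_mulVec_eq_zero (hL : IsCPRep A L) (hirr : (matGraph A).Connected)
    (htf : (matGraph A).CliqueFree 3) (hker : compMatrix A *ᵥ x = 0) (hx : x ≠ 0) (i : Fin n) :
    x i ≠ 0 := by
  obtain ⟨i₀, hi₀⟩ : ∃ i, x i ≠ 0 := Function.ne_iff.1 hx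
  refine hirr.preconnected.forall_of_forall_adj (P := fun v => x v ≠ 0)
    (fun u v huv hu hv => ?_) hi₀ i
  obtain ⟨b, hb, hbu, hbv⟩ := hL.exists_mem_of_adj huv
  have h := hL.mul_eq_mul htf hker hb huv.ne hbu hbv
  rw [hv, mul_zero] at h
  exact mul_ne_zero hbu hu h

lemma exists_ne_apply_ne_zero (hL : IsCPRep A L) (htf : (matGraph A).CliqueFree 3)
    (hker : compMatrix A *ᵥ x = 0) (hx : ∀ i, x i ≠ 0) {b : Fin n → ℝ} (hb : b ∈ L)
    {i : Fin n} (hbi : b i ≠ 0) : ∃ j ≠ i, b j ≠ 0 := by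
  by_contra! h
  have hdef := hL.two_mul_sum_sq_sub_sq_sum_eq_zero htf hker hb
  rw [two_mul_sum_sq_sub_sq_sum_of_single (i := i) fun k hk => by simp [h k hk]] at hdef
  exact mul_ne_zero hbi (hx i) (pow_eq_zero_iff two_ne_zero |>.1 hdef)

lemma eq_of_apply_ne_zero (hL : IsCPRep A L) (htf : (matGraph A).CliqueFree 3)
    (hker : compMatrix A *ᵥ x = 0) (hx : ∀ i, x i ≠ 0) {b c : Fin n → ℝ} (hb : b ∈ L)
    (hc : c ∈ L) {i j : Fin n} (hij : i ≠ j) (hbi : b i ≠ 0) (hbj : b j ≠ 0) (hci : c i ≠ 0)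
    (hcj : c j ≠ 0) : b = c := by
  refine hL.eq_of_smul_eq hb hc (t := c i / b i) (funext fun k => ?_)
  rw [Pi.smul_apply, smul_eq_mul]
  by_cases hki : k = i
  · subst hki
    field_simp
  by_cases hkj : k = j
  · subst hkj
    rw [div_mul_eq_mul_div, div_eq_iff hbi]
    apply mul_right_cancel₀ (hx k)
    linear_combination (-c i) * hL.mul_eq_mul htf hker hb hij hbi hbj
      + b i * hL.mul_eq_mul htf hker hc hij hci hcj
  · rw [hL.eq_zero_of_ne_of_ne htf hb hij hbi hbj ⟨hki, hkj⟩,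
      hL.eq_zero_of_ne_of_ne htf hc hij hci hcj ⟨hki, hkj⟩, mul_zero]

lemma apply_eq_mul (hL : IsCPRep A L) (htf : (matGraph A).CliqueFree 3)
    (hker : compMatrix A *ᵥ x = 0) (hx : ∀ i, x i ≠ 0) {b : Fin n → ℝ} (hb : b ∈ L)
    {i j : Fin n} (hij : i ≠ j) (hbi : b i ≠ 0) (hbj : b j ≠ 0) : A i j = b i * b j := by
  rw [hL.apply_eq_sum, Finset.sum_eq_single_of_mem b (Multiset.mem_toFinset.2 hb)]
  intro c hc hcb
  by_contra hcij
  exact hcb (hL.eq_of_apply_ne_zero htf hker hx hb (Multiset.mem_toFinset.1 hc) hij hbi hbj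
    (left_ne_zero_of_mul hcij) (right_ne_zero_of_mul hcij)).symm

lemma eq_edgeVector (hL : IsCPRep A L) (htf : (matGraph A).CliqueFree 3)
    (hker : compMatrix A *ᵥ x = 0) (hx : ∀ i, x i ≠ 0) {b : Fin n → ℝ} (hb : b ∈ L)
    {i j : Fin n} (hij : i ≠ j) (hbi : b i ≠ 0) (hbj : b j ≠ 0) :
    b = edgeVector A x s(i, j) := by
  have hrel := hL.mul_eq_mul htf hker hb hij hbi hbj
  have hAij := hL.apply_eq_mul htf hker hx hb hij hbi hbj
  have hAji : A j i = b i * b j := (hL.apply_comm j i).trans hAij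
  ext k
  simp only [edgeVector, Sym2.lift_mk]
  split_ifs with hki hkj
  · subst hki
    rw [eq_comm, show A k j * x j / x k = b k ^ 2 by
      rw [hAij, div_eq_iff (hx k)]; linear_combination b k * hrel.symm, Real.sqrt_sq (hL.1 b hb k)]
  · subst hkj
    rw [eq_comm, show A k i * x i / x k = b k ^ 2 by
      rw [hAji, div_eq_iff (hx k)]; linear_combination b k * hrel, Real.sqrt_sq (hL.1 b hb k)]
  · exact hL.eq_zero_of_ne_of_ne htf hb hij hbi hbj ⟨hki, hkj⟩

lemma exists_mem_eq_edgeVector (hL : IsCPRep A L) (htf : (matGraph A).CliqueFree 3)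
    (hker : compMatrix A *ᵥ x = 0) (hx : ∀ i, x i ≠ 0) {i j : Fin n}
    (h : (matGraph A).Adj i j) : ∃ b ∈ L, b i ≠ 0 ∧ b j ≠ 0 ∧ b = edgeVector A x s(i, j) := by
  obtain ⟨b, hb, hbi, hbj⟩ := hL.exists_mem_of_adj h
  exact ⟨b, hb, hbi, hbj, hL.eq_edgeVector htf hker hx hb h.ne hbi hbj⟩

lemma edgeVector_mem (hL : IsCPRep A L) (htf : (matGraph A).CliqueFree 3)
    (hker : compMatrix A *ᵥ x = 0) (hx : ∀ i, x i ≠ 0) {e : Sym2 (Fin n)}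
    (he : e ∈ (matGraph A).edgeSet) : edgeVector A x e ∈ L := by
  induction e using Sym2.ind with
  | _ i j =>
    rw [SimpleGraph.mem_edgeSet] at he
    obtain ⟨b, hb, -, -, rfl⟩ := hL.exists_mem_eq_edgeVector htf hker hx he
    exact hb

lemma edgeVector_apply_ne_zero_iff (hL : IsCPRep A L) (htf : (matGraph A).CliqueFree 3)
    (hker : compMatrix A *ᵥ x = 0) (hx : ∀ i, x i ≠ 0) {e : Sym2 (Fin n)}
    (he : e ∈ (matGraph A).edgeSet) (k : Fin n) : edgeVector A x e k ≠ 0 ↔ k ∈ e := by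
  induction e using Sym2.ind with
  | _ i j =>
    rw [SimpleGraph.mem_edgeSet] at he
    obtain ⟨b, hb, hbi, hbj, rfl⟩ := hL.exists_mem_eq_edgeVector htf hker hx he
    rw [Sym2.mem_iff]
    refine ⟨fun hbk => ?_, ?_⟩
    · by_contra! hk
      exact hbk (hL.eq_zero_of_ne_of_ne htf hb he.ne hbi hbj hk)
    · rintro (rfl | rfl) <;> assumption

theorem eq_map_edgeVector (hL : IsCPRep A L) (htf : (matGraph A).CliqueFree 3)
    (hker : compMatrix A *ᵥ x = 0) (hx : ∀ i, x i ≠ 0) [Fintype (matGraph A).edgeSet] :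
    L = (matGraph A).edgeFinset.val.map (edgeVector A x) := by
  have hinj : Set.InjOn (edgeVector A x) (matGraph A).edgeSet := fun e he e' he' h =>
    Sym2.ext fun k => by
      rw [← hL.edgeVector_apply_ne_zero_iff htf hker hx he, h,
        hL.edgeVector_apply_ne_zero_iff htf hker hx he']
  refine (Multiset.Nodup.ext hL.nodup (Multiset.Nodup.map_on (fun e he e' he' h => ?_)
    (matGraph A).edgeFinset.nodup)).2 fun b => ⟨fun hb => ?_, fun hb => ?_⟩
  · exact hinj (SimpleGraph.mem_edgeFinset.1 he) (SimpleGraph.mem_edgeFinset.1 he') h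
  · obtain ⟨i, hbi⟩ : ∃ i, b i ≠ 0 := Function.ne_iff.1 (hL.2.1 b hb)
    obtain ⟨j, hji, hbj⟩ := hL.exists_ne_apply_ne_zero htf hker hx hb hbi
    refine Multiset.mem_map.2 ⟨s(i, j), ?_, (hL.eq_edgeVector htf hker hx hb hji.symm hbi hbj).symm⟩
    exact SimpleGraph.mem_edgeFinset.2 (hL.adj hb hji.symm hbi hbj)
  · obtain ⟨e, he, rfl⟩ := Multiset.mem_map.1 hb
    exact hL.edgeVector_mem htf hker hx (SimpleGraph.mem_edgeFinset.1 he)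

end IsCPRep

theorem stmt_9_general (n : ℕ) (A : Matrix (Fin n) (Fin n) ℝ)
    (hCP : IsCP A) (hirr : (matGraph A).Connected) (htf : (matGraph A).CliqueFree 3)
    (hsing : (compMatrix A).det = 0) :
    (∃! L, IsCPRep A L) ∧
    ∀ L, IsCPRep A L → Multiset.card L = (matGraph A).edgeSet.ncard := by
  classical
  obtain ⟨x, hx, hker⟩ := Matrix.exists_mulVec_eq_zero_iff.2 hsing
  obtain ⟨L₀, hL₀⟩ := hCP
  have hx_ne := hL₀.apply_ne_zero_of_mulVec_eq_zero hirr htf hker hx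
  have hL_eq : ∀ L, IsCPRep A L → L = (matGraph A).edgeFinset.val.map (edgeVector A x) :=
    fun L hL => hL.eq_map_edgeVector htf hker hx_ne
  refine ⟨⟨L₀, hL₀, fun L hL => (hL_eq L hL).trans (hL_eq L₀ hL₀).symm⟩, fun L hL => ?_⟩
  rw [hL_eq L hL, Multiset.card_map, ← SimpleGraph.coe_edgeFinset, Set.ncard_coe_finset]
  rfl

/-- If `A` is irreducible completely positive with triangle free graph and `M(A)` is
singular, then `A` has a unique CP factorization, whose number of rank-one summands
equals the number of edges of `G(A)`. -/
theorem stmt_9 (n : ℕ) (hn : 2 ≤ n) (A : Matrix (Fin n) (Fin n) ℝ)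
    (hCP : IsCP A) (hirr : (matGraph A).Connected) (htf : (matGraph A).CliqueFree 3)
    (hsing : (compMatrix A).det = 0) :
    (∃! L, IsCPRep A L) ∧
    ∀ L, IsCPRep A L → Multiset.card L = (matGraph A).edgeSet.ncard :=
  stmt_9_general n A hCP hirr htf hsing
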